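/- Let n ≥ 2, d ≥ 1, let u : [n] → ℝ^d and c ∈ ℝ^d satisfy ⟪c, u_i⟫ < ⟪c, u_j⟫ for all i < j. If ω, ω′ ∈ ℝ^d are generic with A^ω = A^{ω′}, and λ, μ > 0, then ν := λ·ω + μ·ω′ is generic, A^ν = A^ω, and τ^ν(i) = λ·τ^ω(i) + μ·τ^{ω′}(i) for every i < n. (Fibers of ω ↦ A^ω are convex cones, on which ω ↦ τ^ω is linear.) -/
import Mathlib


open scoped RealInnerProductSpace

/-- The slope `ρ^ω(i,j)` of the edge from vertex `u i` to vertex `u j`,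
with respect to the objective direction `c`. -/
noncomputable def rho {n d : ℕ} (u : Fin n → EuclideanSpace ℝ (Fin d))
    (c ω : EuclideanSpace ℝ (Fin d)) (i j : Fin n) : ℝ :=
  ⟪ω, u j - u i⟫ / ⟪c, u j - u i⟫

/-- `τ^ω(i)`: the maximal slope from vertex `i` to a later vertex
(the supremum of the finite set of slopes `ρ^ω(i,j)` for `i < j`;
it is meaningful for non-maximal `i`, where this set is nonempty). -/
noncomputable def tau {n d : ℕ} (u : Fin n → EuclideanSpace ℝ (Fin d))
    (c ω : EuclideanSpace ℝ (Fin d)) (i : Fin n) : ℝ :=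
  sSup {x : ℝ | ∃ j : Fin n, i < j ∧ x = rho u c ω i j}

/-- `ω` is generic: for each non-maximal vertex `i` there is a unique `j > i`
whose slope attains the maximal slope `τ^ω(i)`. -/
def Generic {n d : ℕ} (u : Fin n → EuclideanSpace ℝ (Fin d))
    (c ω : EuclideanSpace ℝ (Fin d)) : Prop :=
  ∀ i : Fin n, (i : ℕ) + 1 < n →
    ∃! j : Fin n, i < j ∧ rho u c ω i j = tau u c ω i

/-- `A` is the max-slope arborescence `A^ω`: it fixes the maximal vertex, and
sends every other vertex `i` to an improving neighbour attaining `τ^ω(i)`. -/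
def IsArbo {n d : ℕ} (u : Fin n → EuclideanSpace ℝ (Fin d))
    (c ω : EuclideanSpace ℝ (Fin d)) (A : Fin n → Fin n) : Prop :=
  (∀ i : Fin n, (i : ℕ) + 1 = n → A i = i) ∧
  (∀ i : Fin n, (i : ℕ) + 1 < n →
    i < A i ∧ rho u c ω i (A i) = tau u c ω i)

lemma slopeSet_finite {n d : ℕ} (u : Fin n → EuclideanSpace ℝ (Fin d))
    (c ω : EuclideanSpace ℝ (Fin d)) (i : Fin n) :
    {x : ℝ | ∃ j : Fin n, i < j ∧ x = rho u c ω i j}.Finite := by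
  apply (Set.finite_range (fun j => rho u c ω i j)).subset
  rintro x ⟨j, _, rfl⟩; exact ⟨j, rfl⟩

lemma rho_le_tau {n d : ℕ} (u : Fin n → EuclideanSpace ℝ (Fin d))
    (c ω : EuclideanSpace ℝ (Fin d)) {i j : Fin n} (hij : i < j) :
    rho u c ω i j ≤ tau u c ω i :=
  le_csSup (slopeSet_finite u c ω i).bddAbove ⟨j, hij, rfl⟩

lemma tau_mem {n d : ℕ} (u : Fin n → EuclideanSpace ℝ (Fin d))
    (c ω : EuclideanSpace ℝ (Fin d)) {i : Fin n} (hi : (i : ℕ) + 1 < n) :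
    ∃ j : Fin n, i < j ∧ tau u c ω i = rho u c ω i j := by
  have hne : {x : ℝ | ∃ j : Fin n, i < j ∧ x = rho u c ω i j}.Nonempty := by
    refine ⟨rho u c ω i ⟨(i : ℕ) + 1, hi⟩, ⟨⟨(i : ℕ) + 1, hi⟩, ?_, rfl⟩⟩
    exact Fin.lt_def.mpr (Nat.lt_succ_self _)
  exact hne.csSup_mem (slopeSet_finite u c ω i)

lemma rho_lin {n d : ℕ} (u : Fin n → EuclideanSpace ℝ (Fin d))
    (c ω ω' : EuclideanSpace ℝ (Fin d)) (lam mu : ℝ) (i j : Fin n) :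
    rho u c (lam • ω + mu • ω') i j = lam * rho u c ω i j + mu * rho u c ω' i j := by
  unfold rho
  rw [inner_add_left, real_inner_smul_left, real_inner_smul_left, add_div,
    mul_div_assoc, mul_div_assoc]

/-- fibers of `ω ↦ A^ω` are convex cones on which `ω ↦ τ^ω` is
linear: if `ω, ω'` are generic with the same arborescence `A` and `λ, μ > 0`,
then `ν = λ•ω + μ•ω'` is generic, `A^ν = A`, and
`τ^ν(i) = λ·τ^ω(i) + μ·τ^{ω'}(i)` for every non-maximal `i`. -/
theorem fiber_convex_cone_tau_linear (n d : ℕ) (hn : 2 ≤ n) (hd : 1 ≤ d)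
    (u : Fin n → EuclideanSpace ℝ (Fin d)) (c : EuclideanSpace ℝ (Fin d))
    (hc : ∀ i j : Fin n, i < j → ⟪c, u i⟫ < ⟪c, u j⟫)
    (ω ω' : EuclideanSpace ℝ (Fin d)) (hω : Generic u c ω) (hω' : Generic u c ω')
    (A : Fin n → Fin n) (hA : IsArbo u c ω A) (hA' : IsArbo u c ω' A)
    (lam mu : ℝ) (hlam : 0 < lam) (hmu : 0 < mu) :
    Generic u c (lam • ω + mu • ω') ∧
    IsArbo u c (lam • ω + mu • ω') A ∧
    (∀ B : Fin n → Fin n, IsArbo u c (lam • ω + mu • ω') B → B = A) ∧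
    (∀ i : Fin n, (i : ℕ) + 1 < n →
      tau u c (lam • ω + mu • ω') i = lam * tau u c ω i + mu * tau u c ω' i) := by
  set ν := lam • ω + mu • ω' with hν
  -- strict inequality for non-maximizers, for any generic weight
  have strict : ∀ (w : EuclideanSpace ℝ (Fin d)), Generic u c w → IsArbo u c w A →
      ∀ i : Fin n, (hi : (i : ℕ) + 1 < n) → ∀ j : Fin n, i < j → j ≠ A i →
      rho u c w i j < tau u c w i := by
    intro w hw hAw i hi j hij hjA
    have hle := rho_le_tau u c w hij
    rcases lt_or_eq_of_le hle with h | h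
    · exact h
    · exfalso
      obtain ⟨k, hk, huniq⟩ := hw i hi
      have h1 : j = k := huniq j ⟨hij, h⟩
      have h2 : A i = k := huniq (A i) (hAw.2 i hi)
      exact hjA (h1.trans h2.symm)
  -- rho at ν equals the linear combination, and at A i it is maximal
  have key : ∀ i : Fin n, (hi : (i : ℕ) + 1 < n) →
      rho u c ν i (A i) = lam * tau u c ω i + mu * tau u c ω' i := by
    intro i hi
    rw [rho_lin, (hA.2 i hi).2, (hA'.2 i hi).2]
  have keylt : ∀ i : Fin n, (hi : (i : ℕ) + 1 < n) → ∀ j : Fin n, i < j → j ≠ A i →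
      rho u c ν i j < rho u c ν i (A i) := by
    intro i hi j hij hjA
    rw [key i hi, rho_lin]
    exact add_lt_add (mul_lt_mul_of_pos_left (strict ω hω hA i hi j hij hjA) hlam)
      (mul_lt_mul_of_pos_left (strict ω' hω' hA' i hi j hij hjA) hmu)
  -- tau at ν equals rho ν i (A i)
  have tauν : ∀ i : Fin n, (hi : (i : ℕ) + 1 < n) →
      tau u c ν i = rho u c ν i (A i) := by
    intro i hi
    refine le_antisymm ?_ (rho_le_tau u c ν (hA.2 i hi).1)
    obtain ⟨j, hij, hj⟩ := tau_mem u c ν hi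
    rw [hj]
    rcases eq_or_ne j (A i) with rfl | hne
    · exact le_rfl
    · exact (keylt i hi j hij hne).le
  refine ⟨?_, ⟨hA.1, fun i hi => ⟨(hA.2 i hi).1, (tauν i hi).symm⟩⟩, ?_, ?_⟩
  · -- Generic
    intro i hi
    refine ⟨A i, ⟨(hA.2 i hi).1, (tauν i hi).symm⟩, ?_⟩
    intro j ⟨hij, hj⟩
    by_contra hne
    exact absurd (hj.trans (tauν i hi)) (keylt i hi j hij hne).ne
  · -- uniqueness of B
    intro B hB
    funext i
    rcases eq_or_lt_of_le (Nat.succ_le_of_lt i.isLt) with h | h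
    · rw [hB.1 i h, hA.1 i h]
    · obtain ⟨hij, hj⟩ := hB.2 i h
      by_contra hne
      exact absurd (hj.trans (tauν i h)) (keylt i h (B i) hij hne).ne
  · intro i hi
    rw [tauν i hi, key i hi]
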